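/- arXiv:1710.05391 — 4 statements merged into one kernel-verified Lean document; each statement's English description precedes it below -/
import Mathlib

section
/- The ideal I_O equals the ideal of P generated by all coefficients (in w) of q·E′(w)·F(w) − p·E(w)·F′(w), where ′ denotes the formal derivative d/dw on P[[w]]. -/
/-!
Statement 1.  With `P`, `E`, `F`, `I_O` as in the context, `I_O` equals the
ideal of `P` generated by all coefficients (in `w`) of
`q·E′(w)·F(w) − p·E(w)·F′(w)`, where `′` is the formal derivative `d/dw`.
-/

open MvPolynomial

/-- The index set `{i : 2 ≤ i ≤ p}` for the variables `e₂, …, e_p`. -/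
abbrev EIdx (p : ℕ) := {i : ℕ // 2 ≤ i ∧ i ≤ p}

/-- The variable set of `P = ℚ[e₂,…,e_p, f₂,…,f_q]`. -/
abbrev EFVar (p q : ℕ) := EIdx p ⊕ EIdx q

/-- The power series `E(w) = 1 + e₂w² + ⋯ + e_p wᵖ` in `P⟦w⟧`. -/
noncomputable def Eser (p q : ℕ) : PowerSeries (MvPolynomial (EFVar p q) ℚ) :=
  PowerSeries.mk fun n =>
    if n = 0 then 1 else if h : 2 ≤ n ∧ n ≤ p then X (Sum.inl ⟨n, h⟩) else 0

/-- The power series `F(w) = 1 + f₂w² + ⋯ + f_q w^q` in `P⟦w⟧`. -/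
noncomputable def Fser (p q : ℕ) : PowerSeries (MvPolynomial (EFVar p q) ℚ) :=
  PowerSeries.mk fun n =>
    if n = 0 then 1 else if h : 2 ≤ n ∧ n ≤ q then X (Sum.inr ⟨n, h⟩) else 0

/-- The ideal `I_O ⊆ P` generated by all coefficients of `E(w)^q − F(w)^p`. -/
noncomputable def IdealO (p q : ℕ) : Ideal (MvPolynomial (EFVar p q) ℚ) :=
  Ideal.span (Set.range fun n : ℕ =>
    PowerSeries.coeff n (Eser p q ^ q - Fser p q ^ p))

/-- The formal derivative `d/dw` on a power series ring. -/
noncomputable def psDeriv {R : Type*} [CommRing R] (f : PowerSeries R) : PowerSeries R :=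
  PowerSeries.mk fun n => ((n : R) + 1) * PowerSeries.coeff (n + 1) f

/-! With `W(A, B) = A′B − AB′` one has the identity `EF · W(E^q, F^p) = E^q F^p · (qE′F − pEF′)`.
Over any ℚ-algebra in which `E` and `F` have constant coefficient `1` both are units, so
`E^q = F^p` if and only if `qE′F = pEF′`; for the converse, a vanishing Wronskian makes `E^q / F^p`
a series with zero derivative and constant coefficient `1`, hence `1`. Applied in `P ⧸ J` for
every ideal `J`, this says the coefficients of `E^q − F^p` and of `qE′F − pEF′` generate the same
ideal. -/

namespace PowerSeries

variable {R : Type*} [CommRing R]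

theorem psDeriv_eq_derivative (f : R⟦X⟧) : psDeriv f = d⁄dX R f := by
  ext n
  simp [psDeriv, coeff_derivative, mul_comm]

theorem map_derivative {S : Type*} [CommRing S] (φ : R →+* S) (f : R⟦X⟧) :
    map φ (d⁄dX R f) = d⁄dX S (map φ f) := by
  ext n
  simp [coeff_derivative]

theorem constantCoeff_map {S : Type*} [CommRing S] (φ : R →+* S) (f : R⟦X⟧) :
    constantCoeff (map φ f) = φ (constantCoeff f) :=
  rfl

theorem span_range_coeff_le_iff (f : R⟦X⟧) (J : Ideal R) :
    Ideal.span (Set.range fun n => coeff n f) ≤ J ↔ map (Ideal.Quotient.mk J) f = 0 := by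
  simp [Ideal.span_le, Set.range_subset_iff, PowerSeries.ext_iff, Ideal.Quotient.eq_zero_iff_mem]

theorem span_range_coeff_eq_of_map_eq_zero_iff {f g : R⟦X⟧}
    (h : ∀ J : Ideal R, map (Ideal.Quotient.mk J) f = 0 ↔ map (Ideal.Quotient.mk J) g = 0) :
    Ideal.span (Set.range fun n => coeff n f) = Ideal.span (Set.range fun n => coeff n g) := by
  refine le_antisymm ?_ ?_
  · rw [span_range_coeff_le_iff, h, ← span_range_coeff_le_iff]
  · rw [span_range_coeff_le_iff, ← h, ← span_range_coeff_le_iff]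

theorem mul_derivative_pow (g : R⟦X⟧) (n : ℕ) :
    g * d⁄dX R (g ^ n) = n * g ^ n * d⁄dX R g := by
  cases n with
  | zero => simp
  | succ n => rw [derivative_pow, Nat.add_sub_cancel, pow_succ]; ring

theorem mul_derivative_pow_mul_sub (E F : R⟦X⟧) (p q : ℕ) :
    E * F * (d⁄dX R (E ^ q) * F ^ p - E ^ q * d⁄dX R (F ^ p)) =
      E ^ q * F ^ p * (q * d⁄dX R E * F - p * E * d⁄dX R F) := by
  linear_combination F * F ^ p * mul_derivative_pow E q - E * E ^ q * mul_derivative_pow F p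

theorem eq_of_derivative_mul_eq_mul_derivative [IsAddTorsionFree R] {A B : R⟦X⟧} (hB : IsUnit B)
    (hW : d⁄dX R A * B = A * d⁄dX R B) (h0 : constantCoeff A = constantCoeff B) : A = B := by
  obtain ⟨u, rfl⟩ := hB
  -- `(A / B)′ = (A′B − AB′) / B² = 0` and `A / B` has constant coefficient `1`
  have hquot : A * ↑u⁻¹ = 1 := by
    refine derivative.ext ?_ ?_
    · rw [Derivation.leibniz, derivative_inv, derivative_one, smul_eq_mul, smul_eq_mul]
      linear_combination (↑u⁻¹ : R⟦X⟧) ^ 2 * hW - d⁄dX R A * (↑u⁻¹ : R⟦X⟧) * u.inv_mul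
    · rw [map_mul, h0, ← map_mul, Units.mul_inv, map_one]
  simpa using congrArg (· * (u : R⟦X⟧)) hquot

theorem pow_eq_pow_iff_derivative [IsAddTorsionFree R] {E F : R⟦X⟧}
    (hE : constantCoeff E = 1) (hF : constantCoeff F = 1) (p q : ℕ) :
    E ^ q = F ^ p ↔ q * d⁄dX R E * F = p * E * d⁄dX R F := by
  have hEu : IsUnit E := isUnit_iff_constantCoeff.mpr (hE ▸ isUnit_one)
  have hFu : IsUnit F := isUnit_iff_constantCoeff.mpr (hF ▸ isUnit_one)
  have key := mul_derivative_pow_mul_sub E F p q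
  constructor
  · intro h
    have hW : E ^ q * F ^ p * (q * d⁄dX R E * F - p * E * d⁄dX R F) = 0 := by
      rw [← key, h]; ring
    exact sub_eq_zero.mp (((hEu.pow q).mul (hFu.pow p)).mul_right_eq_zero.mp hW)
  · intro h
    rw [h, sub_self, mul_zero, (hEu.mul hFu).mul_right_eq_zero, sub_eq_zero] at key
    exact eq_of_derivative_mul_eq_mul_derivative (hFu.pow p) key (by simp [hE, hF])

theorem span_coeff_pow_sub_pow_eq_span_coeff_derivative [Algebra ℚ R] {E F : R⟦X⟧}
    (hE : constantCoeff E = 1) (hF : constantCoeff F = 1) (p q : ℕ) :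
    Ideal.span (Set.range fun n => coeff n (E ^ q - F ^ p)) =
      Ideal.span (Set.range fun n =>
        coeff n ((q : R⟦X⟧) * d⁄dX R E * F - (p : R⟦X⟧) * E * d⁄dX R F)) := by
  refine span_range_coeff_eq_of_map_eq_zero_iff fun J => ?_
  have : IsAddTorsionFree (R ⧸ J) := .of_module_rat _
  have hE' : constantCoeff (map (Ideal.Quotient.mk J) E) = 1 := by
    rw [constantCoeff_map, hE, map_one]
  have hF' : constantCoeff (map (Ideal.Quotient.mk J) F) = 1 := by
    rw [constantCoeff_map, hF, map_one]
  simp only [map_sub, map_mul, map_pow, map_natCast, map_derivative, sub_eq_zero]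
  exact pow_eq_pow_iff_derivative hE' hF' p q

end PowerSeries

theorem IdealO_eq_span_logDeriv_coeffs_general (p q : ℕ) :
    IdealO p q = Ideal.span (Set.range fun n : ℕ =>
      PowerSeries.coeff n
        ((q : PowerSeries (MvPolynomial (EFVar p q) ℚ)) * psDeriv (Eser p q) * Fser p q -
         (p : PowerSeries (MvPolynomial (EFVar p q) ℚ)) * Eser p q * psDeriv (Fser p q))) := by
  simp only [IdealO, PowerSeries.psDeriv_eq_derivative]
  exact PowerSeries.span_coeff_pow_sub_pow_eq_span_coeff_derivative
    (by simp [Eser, ← PowerSeries.coeff_zero_eq_constantCoeff_apply])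
    (by simp [Fser, ← PowerSeries.coeff_zero_eq_constantCoeff_apply]) p q

theorem IdealO_eq_span_logDeriv_coeffs (p q : ℕ) (hp : 0 < p) (hq : 0 < q)
    (hpq : Nat.Coprime p q) :
    IdealO p q = Ideal.span (Set.range fun n : ℕ =>
      PowerSeries.coeff n
        ((q : PowerSeries (MvPolynomial (EFVar p q) ℚ)) * psDeriv (Eser p q) * Fser p q -
         (p : PowerSeries (MvPolynomial (EFVar p q) ℚ)) * Eser p q * psDeriv (Fser p q))) :=
  IdealO_eq_span_logDeriv_coeffs_general p q
end

section
/- For every integer i > q, the coefficient g_i lies in the ideal of P′ generated by g_{q+1}, g_{q+2}, …, g_{p+q−1}. -/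
/-!
Statement 6.  Let `p, q` be coprime positive integers, `P′ = ℚ[e₂,…,e_p]`,
`E(w) = 1 + e₂w² + ⋯ + e_p wᵖ ∈ P′⟦w⟧`, and let `G ∈ P′⟦w⟧` have constant
coefficient `1` with `G^p = E(w)^q` (so `G = E(w)^{q/p}`), with coefficients
`g_i`.  Then for every `i > q`, `g_i` lies in the ideal of `P′` generated by
`g_{q+1}, …, g_{p+q−1}`.
-/

open MvPolynomial

/-- The power series `E(w) = 1 + e₂w² + ⋯ + e_p wᵖ` in `P′⟦w⟧`. -/
noncomputable def Eser' (p : ℕ) : PowerSeries (MvPolynomial (EIdx p) ℚ) :=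
  PowerSeries.mk fun n =>
    if n = 0 then 1 else if h : 2 ≤ n ∧ n ≤ p then X ⟨n, h⟩ else 0

/-!
Differentiating `G ^ p = E ^ q` and cancelling the unit `E ^ q` gives `p G' E = q E' G`.
Comparing coefficients of `w ^ i` yields `p i g_i = -∑_{1 ≤ k ≤ p} (p (i - k) - q k) e_k g_{i-k}`.
For `i ≥ p + q` every `g_{i-k}` on the right has `q < i - k < i`, except `g_q` when `i = p + q`
and `k = p`, whose coefficient `p q - q p` vanishes; so induction on `i` concludes.
-/

open Finset PowerSeries

theorem natCast_mul_pow_sub_one_mul {A : Type*} [CommSemiring A] (x : A) (n : ℕ) :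
    (n : A) * x ^ (n - 1) * x = n * x ^ n := by
  cases n <;> simp [pow_succ, mul_assoc]

theorem Derivation.natCast_mul_mul_eq_of_pow_eq_pow {R A : Type*} [CommSemiring R] [CommRing A]
    [Algebra R A] (D : Derivation R A A) {a b : A} {p q : ℕ} (ha : a ∈ nonZeroDivisors A)
    (h : b ^ p = a ^ q) : (p : A) * (D b * a) = q * (D a * b) := by
  have hD : (p : A) * b ^ (p - 1) * D b = q * a ^ (q - 1) * D a := by
    simpa [D.leibniz_pow, nsmul_eq_mul, mul_assoc] using congrArg D h
  rw [← mul_cancel_left_mem_nonZeroDivisors (pow_mem ha q)]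
  calc a ^ q * (p * (D b * a)) = (p * b ^ (p - 1) * b) * (D b * a) := by
        rw [natCast_mul_pow_sub_one_mul, ← h]; ring
    _ = (p * b ^ (p - 1) * D b) * (a * b) := by ring
    _ = (q * a ^ (q - 1) * a) * (D a * b) := by rw [hD]; ring
    _ = a ^ q * (q * (D a * b)) := by rw [natCast_mul_pow_sub_one_mul]; ring

namespace PowerSeries

variable {R : Type*} [CommRing R]

theorem coeff_X_mul_derivative (f : R⟦X⟧) (n : ℕ) :
    coeff n (X * d⁄dX R f) = n * coeff n f := by
  cases n with
  | zero => simp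
  | succ n => rw [coeff_succ_X_mul, coeff_derivative]; push_cast; ring

theorem coeff_natCast_mul (f : R⟦X⟧) (n p : ℕ) :
    coeff n ((p : R⟦X⟧) * f) = p * coeff n f := by
  rw [← map_natCast (C (R := R)), coeff_C_mul]

theorem sum_antidiagonal_eq_zero_of_derivative_relation {E G : R⟦X⟧} {p q : ℕ}
    (h : (p : R⟦X⟧) * (d⁄dX R G * E) = q * (d⁄dX R E * G)) (m : ℕ) :
    ∑ x ∈ antidiagonal m, ((p : R) * x.2 - q * x.1) * (coeff x.1 E * coeff x.2 G) = 0 := by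
  have hX :
      coeff m (X * ((p : R⟦X⟧) * (d⁄dX R G * E) - (q : R⟦X⟧) * (d⁄dX R E * G))) = 0 := by
    rw [h, sub_self, mul_zero, map_zero]
  rw [show X * ((p : R⟦X⟧) * (d⁄dX R G * E) - (q : R⟦X⟧) * (d⁄dX R E * G)) =
      (p : R⟦X⟧) * (E * (X * d⁄dX R G)) - (q : R⟦X⟧) * ((X * d⁄dX R E) * G) by ring] at hX
  rw [map_sub, coeff_natCast_mul, coeff_natCast_mul, coeff_mul, coeff_mul, mul_sum, mul_sum,
    ← sum_sub_distrib] at hX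
  rw [← hX]
  refine sum_congr rfl fun x _ => ?_
  rw [coeff_X_mul_derivative, coeff_X_mul_derivative]
  ring

end PowerSeries

theorem Ideal.mem_of_natCast_mul_mem {R : Type*} [CommRing R] [Algebra ℚ R] {I : Ideal R} {x : R}
    {n : ℕ} (hn : n ≠ 0) (h : (n : R) * x ∈ I) : x ∈ I := by
  have := I.smul_of_tower_mem (n⁻¹ : ℚ) h
  rwa [Algebra.smul_def, ← mul_assoc, ← map_natCast (algebraMap ℚ R), ← map_mul,
    inv_mul_cancel₀ (by exact_mod_cast hn), map_one, one_mul] at this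

theorem mem_span_Icc_of_sum_antidiagonal_eq_zero {R : Type*} [CommRing R] [Algebra ℚ R]
    {e g : ℕ → R} {p q : ℕ} (hp : 0 < p) (he₀ : e 0 = 1) (he : ∀ k, p < k → e k = 0)
    (hrec : ∀ m, ∑ x ∈ antidiagonal m, ((p : R) * x.2 - q * x.1) * (e x.1 * g x.2) = 0) :
    ∀ i, q < i → g i ∈ Ideal.span (g '' Set.Icc (q + 1) (p + q - 1)) := by
  set I := Ideal.span (g '' Set.Icc (q + 1) (p + q - 1))
  intro i
  induction i using Nat.strong_induction_on with | _ i ih => ?_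
  intro hqi
  rcases le_or_gt i (p + q - 1) with hi | hi
  · exact Ideal.subset_span ⟨i, ⟨hqi, hi⟩, rfl⟩
  have hterm : ∀ x ∈ (antidiagonal i).erase (0, i),
      ((p : R) * x.2 - q * x.1) * (e x.1 * g x.2) ∈ I := by
    rintro ⟨k, j⟩ hx
    obtain ⟨hne, hkj⟩ : ¬(k = 0 ∧ j = i) ∧ k + j = i := by simpa using hx
    rcases lt_or_ge p k with hk | hk
    · simp [he k hk]
    rcases (show q ≤ j by omega).eq_or_lt with rfl | hj
    · obtain rfl : k = p := by omega
      simp [mul_comm]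
    · exact I.mul_mem_left _ (I.mul_mem_left _ (ih j (by omega) hj))
  have hlead : ((p * i : ℕ) : R) * g i ∈ I := by
    have := add_sum_erase (antidiagonal i) (fun x => ((p : R) * x.2 - q * x.1) * (e x.1 * g x.2))
      (a := (0, i)) (by simp)
    rw [hrec, add_eq_zero_iff_eq_neg] at this
    convert neg_mem (sum_mem hterm) using 1
    rw [← this]
    simp [he₀]
  exact Ideal.mem_of_natCast_mul_mem (Nat.mul_pos hp (by omega)).ne' hlead

theorem coeff_root_mem_span_general (p q : ℕ) (hp : 0 < p) (G : PowerSeries (MvPolynomial (EIdx p) ℚ))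
    (hGp : G ^ p = Eser' p ^ q) :
    ∀ i : ℕ, q < i →
      PowerSeries.coeff i G ∈
        Ideal.span ((fun j => PowerSeries.coeff j G) ''
          Set.Icc (q + 1) (p + q - 1)) := by
  have hE : Eser' p ∈ nonZeroDivisors _ :=
    (isUnit_iff_constantCoeff.2 (by simp [Eser'])).mem_nonZeroDivisors
  have hrel := (d⁄dX (MvPolynomial (EIdx p) ℚ)).natCast_mul_mul_eq_of_pow_eq_pow hE hGp
  have hrec := sum_antidiagonal_eq_zero_of_derivative_relation hrel
  have h0 : coeff 0 (Eser' p) = 1 := by simp [Eser']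
  have hdeg : ∀ k, p < k → coeff k (Eser' p) = 0 := fun k hk => by
    simp [Eser', show k ≠ 0 by omega, show ¬k ≤ p by omega]
  exact mem_span_Icc_of_sum_antidiagonal_eq_zero hp h0 hdeg hrec

theorem coeff_root_mem_span (p q : ℕ) (hp : 0 < p) (hq : 0 < q)
    (hpq : Nat.Coprime p q) (G : PowerSeries (MvPolynomial (EIdx p) ℚ))
    (hG1 : PowerSeries.constantCoeff G = 1)
    (hGp : G ^ p = Eser' p ^ q) :
    ∀ i : ℕ, q < i →
      PowerSeries.coeff i G ∈
        Ideal.span ((fun j => PowerSeries.coeff j G) ''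
          Set.Icc (q + 1) (p + q - 1)) :=
  coeff_root_mem_span_general p q hp G hGp
end

section
/- The ℚ-algebra homomorphism P → R̃/(ε−1, s) sending e_i to the class of p·e_i for 2 ≤ i ≤ p and f_j to the class of q·f_j for 2 ≤ j ≤ q annihilates the ideal I_O and induces a ring isomorphism P/I_O ≅ R̃/(ε−1, s); that is, the specialization of R̃ at ε = 1, s = 0 is isomorphic to O_{q/p}. -/
/-!
Let `ρ : S → P` send `ε ↦ 1`, `s ↦ 0`, `e_i ↦ e_i/p`, `f_j ↦ f_j/q`. It kills the shifts
`j·p·s·ε` and `e₁ = f₁ = 0`, and turns `A(z)` into the reversal `z^p·E(1/z)` and `B(z)` into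
`z^q·F(1/z)`; so `ρ(F_d)` is the coefficient of `w^{pq-d}` in `E(w)^q − F(w)^p`, and `ρ` maps
`(F₀, …, F_{pq})` onto `I_O`. The map `ι : P → S`, `e_i ↦ p·e_i`, `f_j ↦ q·f_j`, is a section of
`ρ`, and `ι ∘ ρ` is the identity modulo `(ε − 1, s)`. Hence `P → R̃/(ε − 1, s)` is onto, with
kernel `ρ((ε − 1, s) + (F₀, …, F_{pq})) = I_O`.
-/

open MvPolynomial

/-- The variable set of `S = ℚ[ε, s, e₂,…,e_p, f₂,…,f_q]`:
`Sum.inl 0 = ε`, `Sum.inl 1 = s`. -/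
abbrev SVar (p q : ℕ) := Fin 2 ⊕ EFVar p q

/-- The elements `e₁ = (q(p−1)/2)·s`, `e₂, …, e_p` of `S` (and `0` otherwise). -/
noncomputable def eS (p q : ℕ) : ℕ → MvPolynomial (SVar p q) ℚ := fun i =>
  if i = 1 then C ((q : ℚ) * ((p : ℚ) - 1) / 2) * X (Sum.inl 1)
  else if h : 2 ≤ i ∧ i ≤ p then X (Sum.inr (Sum.inl ⟨i, h⟩)) else 0

/-- The elements `f₁ = (p(q−1)/2)·s`, `f₂, …, f_q` of `S` (and `0` otherwise). -/
noncomputable def fS (p q : ℕ) : ℕ → MvPolynomial (SVar p q) ℚ := fun j =>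
  if j = 1 then C ((p : ℚ) * ((q : ℚ) - 1) / 2) * X (Sum.inl 1)
  else if h : 2 ≤ j ∧ j ≤ q then X (Sum.inr (Sum.inr ⟨j, h⟩)) else 0

/-- `A(z) = z^p + Σ_{i=1}^p p·ε·e_i·z^{p−i} ∈ S[z]`. -/
noncomputable def Apoly (p q : ℕ) : Polynomial (MvPolynomial (SVar p q) ℚ) :=
  Polynomial.X ^ p + ∑ i ∈ Finset.Icc 1 p,
    Polynomial.C ((p : MvPolynomial (SVar p q) ℚ) * X (Sum.inl 0) * eS p q i) *
      Polynomial.X ^ (p - i)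

/-- `B(z) = z^q + Σ_{j=1}^q q·ε·f_j·z^{q−j} ∈ S[z]`. -/
noncomputable def Bpoly (p q : ℕ) : Polynomial (MvPolynomial (SVar p q) ℚ) :=
  Polynomial.X ^ q + ∑ j ∈ Finset.Icc 1 q,
    Polynomial.C ((q : MvPolynomial (SVar p q) ℚ) * X (Sum.inl 0) * fS p q j) *
      Polynomial.X ^ (q - j)

/-- `∏_{j=0}^{q−1} A(z + jpsε) − ∏_{i=0}^{p−1} B(z + iqsε) ∈ S[z]`. -/
noncomputable def ABdiff (p q : ℕ) : Polynomial (MvPolynomial (SVar p q) ℚ) :=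
  (∏ j ∈ Finset.range q, (Apoly p q).comp
      (Polynomial.X + Polynomial.C (((j * p : ℕ) : MvPolynomial (SVar p q) ℚ) *
        X (Sum.inl 1) * X (Sum.inl 0)))) -
    ∏ i ∈ Finset.range p, (Bpoly p q).comp
      (Polynomial.X + Polynomial.C (((i * q : ℕ) : MvPolynomial (SVar p q) ℚ) *
        X (Sum.inl 1) * X (Sum.inl 0)))

/-- The ideal `(F₀, …, F_{pq}) ⊆ S` of the coefficients of `z^d`, `0 ≤ d ≤ pq`. -/
noncomputable def IdealF (p q : ℕ) : Ideal (MvPolynomial (SVar p q) ℚ) :=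
  Ideal.span ((fun d => (ABdiff p q).coeff d) '' Set.Iic (p * q))

/-- `R̃ = S/(F₀,…,F_{pq})`. -/
abbrev Rtil (p q : ℕ) := MvPolynomial (SVar p q) ℚ ⧸ IdealF p q

/-- The class of `ε` in `R̃`. -/
noncomputable def εcls (p q : ℕ) : Rtil p q := Ideal.Quotient.mk _ (X (Sum.inl 0))

/-- The class of `s` in `R̃`. -/
noncomputable def scls (p q : ℕ) : Rtil p q := Ideal.Quotient.mk _ (X (Sum.inl 1))

/-- The ideal `(ε−1, s)` of `R̃`. -/
noncomputable def specIdeal (p q : ℕ) : Ideal (Rtil p q) :=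
  Ideal.span {εcls p q - 1, scls p q}

/-- The ℚ-algebra homomorphism `P → R̃/(ε−1, s)`, `e_i ↦ [p·e_i]`, `f_j ↦ [q·f_j]`. -/
noncomputable def specMap (p q : ℕ) :
    MvPolynomial (EFVar p q) ℚ →ₐ[ℚ] (Rtil p q ⧸ specIdeal p q) :=
  aeval (Sum.elim
    (fun i => Ideal.Quotient.mk (specIdeal p q) (Ideal.Quotient.mk (IdealF p q)
      ((p : MvPolynomial (SVar p q) ℚ) * X (Sum.inr (Sum.inl i)))))
    (fun j => Ideal.Quotient.mk (specIdeal p q) (Ideal.Quotient.mk (IdealF p q)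
      ((q : MvPolynomial (SVar p q) ℚ) * X (Sum.inr (Sum.inr j))))))

namespace Polynomial

variable {R : Type*} [CommSemiring R]

theorem reflect_pow_of_natDegree_le {f : R[X]} {N : ℕ} (hf : f.natDegree ≤ N) (k : ℕ) :
    reflect (N * k) (f ^ k) = reflect N f ^ k := by
  induction k with
  | zero => simp
  | succ k ih =>
    have hfk : (f ^ k).natDegree ≤ N * k := by
      simpa [mul_comm] using natDegree_pow_le_of_le k hf
    rw [pow_succ, Nat.mul_succ, reflect_mul _ _ hfk hf, ih, pow_succ]

theorem reflect_sum (N : ℕ) {ι : Type*} (s : Finset ι) (g : ι → R[X]) :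
    reflect N (∑ i ∈ s, g i) = ∑ i ∈ s, reflect N (g i) :=
  map_sum ({ toFun := reflect N, map_zero' := reflect_zero, map_add' := (reflect_add · · N) } :
    R[X] →+ R[X]) g s

theorem reflect_eq_X_pow_add_sum {f : R[X]} {N : ℕ} (hf : f.natDegree ≤ N)
    (h0 : f.coeff 0 = 1) :
    reflect N f = X ^ N + ∑ i ∈ Finset.Icc 1 N, C (f.coeff i) * X ^ (N - i) := by
  conv_lhs => rw [f.as_sum_range_C_mul_X_pow' (Nat.lt_succ_of_le hf)]
  rw [reflect_sum, Finset.range_eq_Ico, Finset.sum_eq_sum_Ico_succ_bot N.succ_pos, zero_add,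
    Nat.succ_eq_add_one, Finset.Ico_add_one_right_eq_Icc, reflect_C_mul_X_pow, h0, C_1,
    one_mul, revAt_zero]
  refine congrArg _ (Finset.sum_congr rfl fun i hi => ?_)
  rw [reflect_C_mul_X_pow, revAt_le (Finset.mem_Icc.mp hi).2]

end Polynomial

theorem PowerSeries.coe_trunc_of_coeff_eq_zero {R : Type*} [CommSemiring R] {f : PowerSeries R}
    {n : ℕ} (hf : ∀ m, n ≤ m → coeff m f = 0) : (trunc n f : PowerSeries R) = f := by
  ext m
  rw [Polynomial.coeff_coe, coeff_trunc]
  split_ifs with hm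
  · rfl
  · exact (hf m (not_lt.mp hm)).symm

theorem AlgHom.ker_comp_eq_map_ker {R A B C : Type*} [CommSemiring R] [Semiring A] [Semiring B]
    [Semiring C] [Algebra R A] [Algebra R B] [Algebra R C]
    {ι : A →ₐ[R] B} {r : B →ₐ[R] A} {π : B →ₐ[R] C}
    (hr : ∀ a, r (ι a) = a) (hπ : ∀ b, π (ι (r b)) = π b) :
    RingHom.ker (π.comp ι) = (RingHom.ker π).map r := by
  refine le_antisymm (fun a ha => hr a ▸ Ideal.mem_map_of_mem r ha) ?_
  rw [Ideal.map_le_iff_le_comap]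
  intro b hb
  rw [Ideal.mem_comap, RingHom.mem_ker, comp_apply, hπ, ← RingHom.mem_ker]
  exact hb

theorem algebraMap_inv_natCast_mul_natCast_mul {A : Type*} [Semiring A] [Algebra ℚ A] {n : ℕ}
    (hn : n ≠ 0) (a : A) : algebraMap ℚ A (n : ℚ)⁻¹ * (n * a) = a := by
  rw [← mul_assoc, ← map_natCast (algebraMap ℚ A), ← map_mul,
    inv_mul_cancel₀ (Nat.cast_ne_zero.mpr hn), map_one, one_mul]

section

variable (p q : ℕ)

noncomputable def scaledIncl : MvPolynomial (EFVar p q) ℚ →ₐ[ℚ] MvPolynomial (SVar p q) ℚ :=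
  aeval (Sum.elim (fun i => (p : MvPolynomial (SVar p q) ℚ) * X (Sum.inr (Sum.inl i)))
    (fun j => (q : MvPolynomial (SVar p q) ℚ) * X (Sum.inr (Sum.inr j))))

noncomputable def specEval : MvPolynomial (SVar p q) ℚ →ₐ[ℚ] MvPolynomial (EFVar p q) ℚ :=
  aeval (Sum.elim ![1, 0]
    (Sum.elim (fun i => C (p : ℚ)⁻¹ * X (Sum.inl i)) (fun j => C (q : ℚ)⁻¹ * X (Sum.inr j))))

noncomputable def specQuotMk : MvPolynomial (SVar p q) ℚ →ₐ[ℚ] Rtil p q ⧸ specIdeal p q :=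
  (Ideal.Quotient.mkₐ ℚ (specIdeal p q)).comp (Ideal.Quotient.mkₐ ℚ (IdealF p q))

noncomputable def specIdealS : Ideal (MvPolynomial (SVar p q) ℚ) :=
  Ideal.span {X (Sum.inl 0) - 1, X (Sum.inl 1)}

theorem specMap_eq_comp : specMap p q = (specQuotMk p q).comp (scaledIncl p q) := by
  apply algHom_ext
  rintro (i | j) <;> simp [specMap, specQuotMk, scaledIncl]

theorem specEval_scaledIncl (x : MvPolynomial (EFVar p q) ℚ) :
    specEval p q (scaledIncl p q x) = x := by
  suffices h : (specEval p q).comp (scaledIncl p q) = AlgHom.id ℚ _ from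
    DFunLike.congr_fun h x
  apply algHom_ext
  rintro (⟨i, hi⟩ | ⟨j, hj⟩)
  · simpa [specEval, scaledIncl, mul_left_comm] using
      algebraMap_inv_natCast_mul_natCast_mul (by omega)
        (X (Sum.inl ⟨i, hi⟩) : MvPolynomial (EFVar p q) ℚ)
  · simpa [specEval, scaledIncl, mul_left_comm] using
      algebraMap_inv_natCast_mul_natCast_mul (by omega)
        (X (Sum.inr ⟨j, hj⟩) : MvPolynomial (EFVar p q) ℚ)

theorem specQuotMk_X_eps : specQuotMk p q (X (Sum.inl 0)) = 1 := by
  rw [← map_one (specQuotMk p q), ← sub_eq_zero, ← map_sub]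
  exact Ideal.Quotient.eq_zero_iff_mem.mpr (Ideal.subset_span (Set.mem_insert _ _))

theorem specQuotMk_X_s : specQuotMk p q (X (Sum.inl 1)) = 0 :=
  Ideal.Quotient.eq_zero_iff_mem.mpr (Ideal.subset_span (Set.mem_insert_of_mem _ rfl))

theorem specQuotMk_scaledIncl_specEval (x : MvPolynomial (SVar p q) ℚ) :
    specQuotMk p q (scaledIncl p q (specEval p q x)) = specQuotMk p q x := by
  suffices h : ((specQuotMk p q).comp (scaledIncl p q)).comp (specEval p q) = specQuotMk p q from
    DFunLike.congr_fun h x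
  apply algHom_ext
  rintro (i | ⟨i, hi⟩ | ⟨j, hj⟩)
  · fin_cases i
    · simp [specEval, specQuotMk_X_eps]
    · simp [specEval, specQuotMk_X_s]
  · simpa [specEval, scaledIncl] using algebraMap_inv_natCast_mul_natCast_mul (by omega) _
  · simpa [specEval, scaledIncl] using algebraMap_inv_natCast_mul_natCast_mul (by omega) _

theorem specQuotMk_surjective : Function.Surjective (specQuotMk p q) :=
  Ideal.Quotient.mk_surjective.comp Ideal.Quotient.mk_surjective

theorem specIdeal_eq_map : specIdeal p q = (specIdealS p q).map (Ideal.Quotient.mk _) := by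
  simp [specIdeal, specIdealS, Ideal.map_span, Set.image_pair, εcls, scls]

theorem ker_specQuotMk : RingHom.ker (specQuotMk p q) = specIdealS p q ⊔ IdealF p q := by
  calc RingHom.ker (specQuotMk p q)
      = (specIdeal p q).comap (Ideal.Quotient.mk (IdealF p q)) := by
        ext x
        exact Ideal.Quotient.eq_zero_iff_mem
    _ = specIdealS p q ⊔ IdealF p q := by
      rw [specIdeal_eq_map, Ideal.comap_map_of_surjective _ Ideal.Quotient.mk_surjective,
        ← RingHom.ker_eq_comap_bot, Ideal.mk_ker]

theorem map_specEval_specIdealS : (specIdealS p q).map (specEval p q) = ⊥ := by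
  simp [specIdealS, Ideal.map_span, specEval]

theorem coeff_Eser_of_lt {n : ℕ} (hn : p < n) : PowerSeries.coeff n (Eser p q) = 0 := by
  simp [Eser, show n ≠ 0 by omega, show ¬ n ≤ p by omega]

theorem coeff_Fser_of_lt {n : ℕ} (hn : q < n) : PowerSeries.coeff n (Fser p q) = 0 := by
  simp [Fser, show n ≠ 0 by omega, show ¬ n ≤ q by omega]

noncomputable abbrev Epoly : Polynomial (MvPolynomial (EFVar p q) ℚ) :=
  PowerSeries.trunc (p + 1) (Eser p q)

noncomputable abbrev Fpoly : Polynomial (MvPolynomial (EFVar p q) ℚ) :=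
  PowerSeries.trunc (q + 1) (Fser p q)

theorem natDegree_Epoly_le : (Epoly p q).natDegree ≤ p :=
  Nat.lt_succ_iff.mp (PowerSeries.natDegree_trunc_lt _ _)

theorem natDegree_Fpoly_le : (Fpoly p q).natDegree ≤ q :=
  Nat.lt_succ_iff.mp (PowerSeries.natDegree_trunc_lt _ _)

theorem coe_Epoly : (Epoly p q : PowerSeries _) = Eser p q :=
  PowerSeries.coe_trunc_of_coeff_eq_zero fun _ hn => coeff_Eser_of_lt p q hn

theorem coe_Fpoly : (Fpoly p q : PowerSeries _) = Fser p q :=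
  PowerSeries.coe_trunc_of_coeff_eq_zero fun _ hn => coeff_Fser_of_lt p q hn

theorem specEval_coeff_Apoly {i : ℕ} (hi : 1 ≤ i) :
    specEval p q ((p : MvPolynomial (SVar p q) ℚ) * X (Sum.inl 0) * eS p q i) =
      PowerSeries.coeff i (Eser p q) := by
  rcases hi.eq_or_lt with rfl | hi
  · simp [eS, Eser, specEval]
  have h2 : 2 ≤ i := hi
  by_cases hip : i ≤ p
  · simpa [eS, Eser, specEval, hi.ne', h2, hip, show i ≠ 0 by omega, mul_left_comm] using
      algebraMap_inv_natCast_mul_natCast_mul (by omega)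
        (X (Sum.inl ⟨i, h2, hip⟩) : MvPolynomial (EFVar p q) ℚ)
  · simp [eS, Eser, hi.ne', hip, show i ≠ 0 by omega]

theorem specEval_coeff_Bpoly {j : ℕ} (hj : 1 ≤ j) :
    specEval p q ((q : MvPolynomial (SVar p q) ℚ) * X (Sum.inl 0) * fS p q j) =
      PowerSeries.coeff j (Fser p q) := by
  rcases hj.eq_or_lt with rfl | hj
  · simp [fS, Fser, specEval]
  have h2 : 2 ≤ j := hj
  by_cases hjq : j ≤ q
  · simpa [fS, Fser, specEval, hj.ne', h2, hjq, show j ≠ 0 by omega, mul_left_comm] using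
      algebraMap_inv_natCast_mul_natCast_mul (by omega)
        (X (Sum.inr ⟨j, h2, hjq⟩) : MvPolynomial (EFVar p q) ℚ)
  · simp [fS, Fser, hj.ne', hjq, show j ≠ 0 by omega]

theorem Apoly_map_specEval :
    (Apoly p q).map (specEval p q).toRingHom = (Epoly p q).reflect p := by
  rw [Polynomial.reflect_eq_X_pow_add_sum (natDegree_Epoly_le p q)
    (by simp [PowerSeries.coeff_trunc, Eser]), Apoly]
  simp only [Polynomial.map_add, Polynomial.map_pow, Polynomial.map_X, Polynomial.map_sum,
    Polynomial.map_mul, Polynomial.map_C]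
  refine congrArg _ (Finset.sum_congr rfl fun i hi => ?_)
  obtain ⟨hi1, hip⟩ := Finset.mem_Icc.mp hi
  rw [PowerSeries.coeff_trunc, if_pos (Nat.lt_succ_of_le hip)]
  exact congrArg (Polynomial.C · * _) (specEval_coeff_Apoly p q hi1)

theorem Bpoly_map_specEval :
    (Bpoly p q).map (specEval p q).toRingHom = (Fpoly p q).reflect q := by
  rw [Polynomial.reflect_eq_X_pow_add_sum (natDegree_Fpoly_le p q)
    (by simp [PowerSeries.coeff_trunc, Fser]), Bpoly]
  simp only [Polynomial.map_add, Polynomial.map_pow, Polynomial.map_X, Polynomial.map_sum,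
    Polynomial.map_mul, Polynomial.map_C]
  refine congrArg _ (Finset.sum_congr rfl fun j hj => ?_)
  obtain ⟨hj1, hjq⟩ := Finset.mem_Icc.mp hj
  rw [PowerSeries.coeff_trunc, if_pos (Nat.lt_succ_of_le hjq)]
  exact congrArg (Polynomial.C · * _) (specEval_coeff_Bpoly p q hj1)

theorem ABdiff_map_specEval : (ABdiff p q).map (specEval p q).toRingHom =
    (Epoly p q ^ q - Fpoly p q ^ p).reflect (p * q) := by
  have hshift (k : ℕ) :
      specEval p q ((k : MvPolynomial (SVar p q) ℚ) * X (Sum.inl 1) * X (Sum.inl 0)) = 0 := by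
    simp [specEval]
  simp only [ABdiff, Polynomial.map_sub, Polynomial.map_prod, Polynomial.map_comp,
    Polynomial.map_add, Polynomial.map_X, Polynomial.map_C, AlgHom.toRingHom_eq_coe,
    RingHom.coe_coe, hshift, Polynomial.C_0, add_zero, Polynomial.comp_X]
  rw [← AlgHom.toRingHom_eq_coe, Apoly_map_specEval, Bpoly_map_specEval, Finset.prod_const,
    Finset.prod_const, Finset.card_range, Finset.card_range, Polynomial.reflect_sub,
    ← Polynomial.reflect_pow_of_natDegree_le (natDegree_Epoly_le p q),
    ← Polynomial.reflect_pow_of_natDegree_le (natDegree_Fpoly_le p q), mul_comm q p]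

theorem Eser_pow_sub_Fser_pow_eq_coe :
    Eser p q ^ q - Fser p q ^ p =
      ((Epoly p q ^ q - Fpoly p q ^ p : Polynomial _) : PowerSeries _) := by
  rw [Polynomial.coe_sub, Polynomial.coe_pow, Polynomial.coe_pow, coe_Epoly, coe_Fpoly]

theorem coeff_Eser_pow_sub_Fser_pow_of_lt {n : ℕ} (hn : p * q < n) :
    PowerSeries.coeff n (Eser p q ^ q - Fser p q ^ p) = 0 := by
  rw [Eser_pow_sub_Fser_pow_eq_coe, Polynomial.coeff_coe]
  refine Polynomial.coeff_eq_zero_of_natDegree_lt (lt_of_le_of_lt ?_ hn)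
  refine (Polynomial.natDegree_sub_le _ _).trans (max_le ?_ ?_)
  · simpa [mul_comm] using Polynomial.natDegree_pow_le_of_le q (natDegree_Epoly_le p q)
  · exact Polynomial.natDegree_pow_le_of_le p (natDegree_Fpoly_le p q)

theorem specEval_coeff_ABdiff {d : ℕ} (hd : d ≤ p * q) :
    specEval p q ((ABdiff p q).coeff d) =
      PowerSeries.coeff (p * q - d) (Eser p q ^ q - Fser p q ^ p) := by
  rw [Eser_pow_sub_Fser_pow_eq_coe, Polynomial.coeff_coe, ← Polynomial.revAt_le hd,
    ← Polynomial.coeff_reflect, ← ABdiff_map_specEval, Polynomial.coeff_map]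
  rfl

theorem map_specEval_IdealF : (IdealF p q).map (specEval p q) = IdealO p q := by
  rw [IdealF, IdealO, Ideal.map_span]
  apply le_antisymm <;> rw [Ideal.span_le]
  · rintro _ ⟨_, ⟨d, hd, rfl⟩, rfl⟩
    rw [specEval_coeff_ABdiff p q hd]
    exact Ideal.subset_span ⟨_, rfl⟩
  · rintro _ ⟨n, rfl⟩
    dsimp only
    rcases le_or_gt n (p * q) with hn | hn
    · rw [← Nat.sub_sub_self hn, ← specEval_coeff_ABdiff p q (Nat.sub_le _ _)]
      exact Ideal.subset_span ⟨_, ⟨p * q - n, Nat.sub_le _ _, rfl⟩, rfl⟩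
    · rw [coeff_Eser_pow_sub_Fser_pow_of_lt p q hn]
      exact zero_mem _

end

theorem specialization_eps_one_s_zero_general (p q : ℕ) :
    RingHom.ker (specMap p q) = IdealO p q ∧ Function.Surjective (specMap p q) := by
  have hπ := specQuotMk_scaledIncl_specEval p q
  rw [specMap_eq_comp]
  refine ⟨?_, ?_⟩
  · rw [AlgHom.ker_comp_eq_map_ker (specEval_scaledIncl p q) hπ, ker_specQuotMk, Ideal.map_sup,
      map_specEval_specIdealS, bot_sup_eq, map_specEval_IdealF]
  · have hcomp : (specQuotMk p q).comp (scaledIncl p q) ∘ specEval p q = specQuotMk p q :=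
      funext hπ
    exact Function.Surjective.of_comp (hcomp ▸ specQuotMk_surjective p q)

theorem specialization_eps_one_s_zero (p q : ℕ) (hp : 0 < p) (hq : 0 < q)
    (hpq : Nat.Coprime p q) :
    RingHom.ker (specMap p q) = IdealO p q ∧ Function.Surjective (specMap p q) :=
  specialization_eps_one_s_zero_general p q
end

section
/- Let σ ∈ Σ_{q/p}. For each 0 ≤ i ≤ p−1 the set of elements of σ congruent to i modulo p is nonempty and bounded below; let a_i be its smallest element (the p-basis of σ). Similarly, for each 0 ≤ j ≤ q−1 let b_j be the smallest element of σ congruent to j modulo q (the q-basis of σ). Then Σ_{i=0}^{p−1} a_i = pq(p−1)/2 and Σ_{j=0}^{q−1} b_j = pq(q−1)/2. -/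
/-!
If a set `A ⊆ ℤ` is stable under `+ p`, its residue class `i` mod `p` is the progression
`a_i + pℕ` starting at its least element. Comparing two such sets class by class therefore gives
`b_i - a_i = p (#(A ∖ B)_i - #(B ∖ A)_i)`, and summing over the classes
`∑ b_i - ∑ a_i = p (#(A ∖ B) - #(B ∖ A))`. For `A = σ`, `B = Γ` the right side vanishes, so the
`p`-basis of `σ` has the same sum as that of `Γ`, which is `{qc : 0 ≤ c < p}` because `q` is
invertible mod `p`; its sum is `pq(p-1)/2`. The `q`-basis is the same argument with `p` and `q`
exchanged. The least elements of the classes of `σ` exist because `σ` differs from `Γ` by finite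
sets.
-/

/-- The numerical semigroup `Γ = {ap + bq : a, b ∈ ℕ} ⊆ ℤ`. -/
def Gam (p q : ℕ) : Set ℤ := {n : ℤ | ∃ a b : ℕ, n = a * p + b * q}

open Finset

def ShiftStable (A : Set ℤ) (n : ℕ) : Prop := ∀ x ∈ A, x + n ∈ A

def modClass (A : Set ℤ) (n : ℕ) (i : ℤ) : Set ℤ := {x | x ∈ A ∧ x % (n : ℤ) = i}

section ResidueClasses

variable {A B : Set ℤ} {n : ℕ}

lemma ShiftStable.add_mul_mem (hA : ShiftStable A n) {x : ℤ} (hx : x ∈ A) (k : ℕ) :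
    x + k * n ∈ A := by
  induction k with
  | zero => simpa using hx
  | succ k ih => simpa [add_mul, add_assoc] using hA _ ih

lemma ShiftStable.mem_of_le_of_modEq (hn : 0 < n) (hA : ShiftStable A n) {a x : ℤ}
    (ha : a ∈ A) (hax : a ≤ x) (h : a ≡ x [ZMOD n]) : x ∈ A := by
  obtain ⟨k, hk⟩ := h.dvd
  lift k to ℕ using by nlinarith
  rw [show x = a + k * n by linarith]
  exact hA.add_mul_mem ha k

lemma modClass_diff_eq_Ico (hn : 0 < n) (hA : ShiftStable A n) (hB : ShiftStable B n)
    {i a b : ℤ} (ha : IsLeast (modClass A n i) a) (hb : IsLeast (modClass B n i) b) :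
    modClass (A \ B) n i = ↑({x ∈ Ico a b | x ≡ a [ZMOD n]} : Finset ℤ) := by
  obtain ⟨⟨haA, hai⟩, ha_le⟩ := ha
  obtain ⟨⟨hbB, hbi⟩, hb_le⟩ := hb
  ext x
  simp only [modClass, Set.mem_sdiff, Finset.mem_coe, Finset.mem_filter, Finset.mem_Ico,
    Set.mem_ofPred_eq]
  constructor
  · rintro ⟨⟨hxA, hxB⟩, hxi⟩
    refine ⟨⟨ha_le ⟨hxA, hxi⟩, not_le.mp fun hbx => hxB ?_⟩, hxi.trans hai.symm⟩
    exact hB.mem_of_le_of_modEq hn hbB hbx (hbi.trans hxi.symm)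
  · rintro ⟨⟨hax, hxb⟩, hxa⟩
    refine ⟨⟨hA.mem_of_le_of_modEq hn haA hax hxa.symm, fun hxB => ?_⟩, hxa.eq.trans hai⟩
    exact (hb_le ⟨hxB, hxa.eq.trans hai⟩).not_gt hxb

lemma card_Ico_filter_modEq (hn : 0 < n) {a b m : ℤ} (hm : b = a + n * m) :
    #{x ∈ Ico a b | x ≡ a [ZMOD n]} = m.toNat := by
  have := Int.Ico_filter_modEq_card a b (r := n) (by exact_mod_cast hn) a
  subst hm
  simp only [Int.cast_add, Int.cast_mul, Int.cast_natCast, add_sub_cancel_left, ne_eq,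
    Nat.cast_eq_zero, hn.ne', not_false_eq_true, mul_div_cancel_left₀, Int.ceil_intCast, sub_self,
    zero_div, Int.ceil_zero, sub_zero] at this
  omega

lemma sub_eq_mul_ncard_sub (hn : 0 < n) (hA : ShiftStable A n) (hB : ShiftStable B n)
    {i a b : ℤ} (ha : IsLeast (modClass A n i) a) (hb : IsLeast (modClass B n i) b) :
    b - a = n * ((modClass (A \ B) n i).ncard - (modClass (B \ A) n i).ncard : ℤ) := by
  obtain ⟨m, hm⟩ := Int.ModEq.dvd (ha.1.2.trans hb.1.2.symm)
  rw [modClass_diff_eq_Ico hn hA hB ha hb, modClass_diff_eq_Ico hn hB hA hb ha,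
    Set.ncard_coe_finset, Set.ncard_coe_finset,
    card_Ico_filter_modEq hn (by linarith : b = a + n * m),
    card_Ico_filter_modEq hn (by linarith : a = b + n * -m),
    show ((m.toNat : ℤ) - (-m).toNat) = m by omega, hm]

lemma sum_ncard_modClass (hn : 0 < n) {S : Set ℤ} (hS : S.Finite) :
    ∑ i ∈ range n, (modClass S n i).ncard = S.ncard := by
  have hn' : (0 : ℤ) < n := by exact_mod_cast hn
  have hfiber (i : ℕ) :
      modClass S n i = ↑{x ∈ hS.toFinset | (x % (n : ℤ)).toNat = i} := by
    ext x
    have := Int.emod_nonneg x hn'.ne'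
    simp only [modClass, coe_filter, Set.Finite.mem_toFinset, Set.mem_ofPred_eq]
    exact and_congr_right fun _ => by omega
  simp_rw [hfiber, Set.ncard_coe_finset]
  rw [Set.ncard_eq_toFinset_card S hS,
    card_eq_sum_card_fiberwise (f := fun x : ℤ => (x % (n : ℤ)).toNat)]
  intro x _
  have := Int.emod_lt_of_pos x hn'
  simp only [coe_range, Set.mem_Iio]
  omega

lemma sum_sub_sum_eq_mul_ncard_sub (hn : 0 < n) (hA : ShiftStable A n) (hB : ShiftStable B n)
    (hAB : (A \ B).Finite) (hBA : (B \ A).Finite) {a b : ℕ → ℤ}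
    (ha : ∀ i < n, IsLeast (modClass A n i) (a i)) (hb : ∀ i < n, IsLeast (modClass B n i) (b i)) :
    ∑ i ∈ range n, b i - ∑ i ∈ range n, a i = n * ((A \ B).ncard - (B \ A).ncard : ℤ) := by
  rw [← sum_sub_distrib, sum_congr rfl fun i hi =>
    sub_eq_mul_ncard_sub hn hA hB (ha i (mem_range.mp hi)) (hb i (mem_range.mp hi)),
    ← mul_sum, sum_sub_distrib, ← sum_ncard_modClass hn hAB, ← sum_ncard_modClass hn hBA]
  push_cast
  rfl

lemma exists_isLeast_modClass_of_finite_diff (hn : 0 < n) (hB : ShiftStable B n)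
    (hAB : (A \ B).Finite) (hBA : (B \ A).Finite) {i b : ℤ} (hb : IsLeast (modClass B n i) b) :
    ∃ a, IsLeast (modClass A n i) a := by
  obtain ⟨⟨hbB, hbi⟩, hb_le⟩ := hb
  obtain ⟨M, hM⟩ := hBA.bddAbove
  obtain ⟨L, hL⟩ := hAB.bddBelow
  set x := b + ((M - b).toNat + 1 : ℕ) * n
  have hMx : M < x := by
    have : (1 : ℤ) ≤ n := by exact_mod_cast hn
    simp only [x]
    push_cast
    nlinarith [Int.self_le_toNat (M - b)]
  have hxA : x ∈ A := by
    by_contra hxA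
    exact (hM ⟨hB.add_mul_mem hbB _, hxA⟩).not_gt hMx
  obtain ⟨a, ha, ha_le⟩ := Int.exists_least_of_bdd (P := (· ∈ modClass A n i))
    ⟨min L b, fun y ⟨hyA, hyi⟩ => by
      by_cases hyB : y ∈ B
      · exact (min_le_right _ _).trans (hb_le ⟨hyB, hyi⟩)
      · exact (min_le_left _ _).trans (hL ⟨hyA, hyB⟩)⟩
    ⟨x, hxA, by simpa [x] using hbi⟩
  exact ⟨a, ha, ha_le⟩

end ResidueClasses

section NumericalSemigroup

variable {p q : ℕ}

lemma gam_comm (p q : ℕ) : Gam p q = Gam q p := by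
  ext n
  constructor <;> rintro ⟨a, b, rfl⟩ <;> exact ⟨b, a, add_comm _ _⟩

lemma shiftStable_gam (p q : ℕ) : ShiftStable (Gam p q) p := by
  rintro _ ⟨a, b, rfl⟩
  exact ⟨a + 1, b, by push_cast; ring⟩

lemma injOn_mul_mod (hpq : p.Coprime q) : Set.InjOn (fun c => q * c % p) (range p) :=
  fun _ hc₁ _ hc₂ h =>
    (Nat.ModEq.cancel_left_of_coprime hpq h).eq_of_lt_of_lt (mem_range.mp hc₁) (mem_range.mp hc₂)

lemma image_mul_mod_range (hpq : p.Coprime q) : (range p).image (fun c => q * c % p) = range p :=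
  eq_of_subset_of_card_le
    (fun _ h => by
      obtain ⟨c, hc, rfl⟩ := mem_image.mp h
      exact mem_range.mpr (Nat.mod_lt _ (Nat.zero_lt_of_lt (mem_range.mp hc))))
    (card_image_of_injOn (injOn_mul_mod hpq)).ge

lemma isLeast_modClass_gam (hpq : p.Coprime q) {c : ℕ} (hc : c < p) :
    IsLeast (modClass (Gam p q) p (q * c % p : ℕ)) (q * c : ℕ) := by
  refine ⟨⟨⟨0, c, by push_cast; ring⟩, by push_cast; rfl⟩, ?_⟩
  rintro _ ⟨⟨u, v, rfl⟩, hx⟩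
  have hvc : q * v ≡ q * c [MOD p] := by
    have : u * p + v * q ≡ q * c [MOD p] := Int.natCast_modEq_iff.mp (by push_cast; exact hx)
    simpa [Nat.ModEq, mul_comm] using this
  have hcv : c ≤ v := by
    rw [← Nat.mod_eq_of_lt hc, ← Nat.ModEq.cancel_left_of_coprime hpq hvc]
    exact Nat.mod_le v p
  push_cast
  nlinarith

lemma exists_isLeast_modClass_gam (hpq : p.Coprime q) {i : ℕ} (hi : i < p) :
    ∃ g, IsLeast (modClass (Gam p q) p i) g := by
  rw [← mem_range, ← image_mul_mod_range hpq, mem_image] at hi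
  obtain ⟨c, hc, rfl⟩ := hi
  exact ⟨_, isLeast_modClass_gam hpq (mem_range.mp hc)⟩

lemma two_mul_sum_isLeast_modClass_gam (hpq : p.Coprime q) {g : ℕ → ℤ}
    (hg : ∀ i < p, IsLeast (modClass (Gam p q) p i) (g i)) :
    2 * ∑ i ∈ range p, g i = p * q * (p - 1) := by
  have hsum : ∑ i ∈ range p, g i = ∑ c ∈ range p, ((q * c : ℕ) : ℤ) := by
    conv_lhs => rw [← image_mul_mod_range hpq]
    rw [sum_image (injOn_mul_mod hpq)]
    refine sum_congr rfl fun c hc => ?_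
    have hc := mem_range.mp hc
    exact (hg _ (Nat.mod_lt _ (by omega))).unique (isLeast_modClass_gam hpq hc)
  have hgauss := congrArg (Nat.cast : ℕ → ℤ) (sum_range_id_mul_two p)
  rcases p with _ | p
  · simp
  rw [hsum]
  push_cast at hgauss ⊢
  rw [← mul_sum]
  linear_combination q * hgauss

end NumericalSemigroup

theorem basis_sum_of_shiftStable {p q : ℕ} (hp : 0 < p) (hpq : p.Coprime q) {σ : Set ℤ}
    (hσ : ShiftStable σ p) (hfin₁ : (σ \ Gam p q).Finite) (hfin₂ : (Gam p q \ σ).Finite)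
    (hcard : (σ \ Gam p q).ncard = (Gam p q \ σ).ncard) :
    (∀ i < p, ∃ m, IsLeast (modClass σ p i) m) ∧
    ∀ a : ℕ → ℤ, (∀ i < p, IsLeast (modClass σ p i) (a i)) →
      2 * ∑ i ∈ range p, a i = p * q * (p - 1) := by
  choose! g hg using fun i (hi : i < p) => exists_isLeast_modClass_gam (q := q) hpq hi
  refine ⟨fun i hi => exists_isLeast_modClass_of_finite_diff hp (shiftStable_gam p q)
    hfin₁ hfin₂ (hg i hi), fun a ha => ?_⟩
  have hsums := sum_sub_sum_eq_mul_ncard_sub hp hσ (shiftStable_gam p q) hfin₁ hfin₂ ha hg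
  rw [hcard, sub_self, mul_zero, sub_eq_zero] at hsums
  rw [← hsums]
  exact two_mul_sum_isLeast_modClass_gam hpq hg

theorem p_basis_q_basis_sum_general (p q : ℕ) (hp : 0 < p) (hq : 0 < q)
    (hpq : Nat.Coprime p q) (σ : Set ℤ)
    (hstabp : ∀ x ∈ σ, x + p ∈ σ) (hstabq : ∀ x ∈ σ, x + q ∈ σ)
    (hfin₁ : (σ \ Gam p q).Finite) (hfin₂ : (Gam p q \ σ).Finite)
    (hcard : (σ \ Gam p q).ncard = (Gam p q \ σ).ncard) :
    (∀ i : ℕ, i < p → ∃ m : ℤ, IsLeast {x : ℤ | x ∈ σ ∧ x % (p : ℤ) = (i : ℤ)} m) ∧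
    (∀ j : ℕ, j < q → ∃ m : ℤ, IsLeast {x : ℤ | x ∈ σ ∧ x % (q : ℤ) = (j : ℤ)} m) ∧
    ∀ a b : ℕ → ℤ,
      (∀ i : ℕ, i < p → IsLeast {x : ℤ | x ∈ σ ∧ x % (p : ℤ) = (i : ℤ)} (a i)) →
      (∀ j : ℕ, j < q → IsLeast {x : ℤ | x ∈ σ ∧ x % (q : ℤ) = (j : ℤ)} (b j)) →
      2 * ∑ i ∈ Finset.range p, a i = (p : ℤ) * (q : ℤ) * ((p : ℤ) - 1) ∧
      2 * ∑ j ∈ Finset.range q, b j = (p : ℤ) * (q : ℤ) * ((q : ℤ) - 1) := by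
  obtain ⟨hexists_p, hsum_p⟩ := basis_sum_of_shiftStable hp hpq hstabp hfin₁ hfin₂ hcard
  rw [gam_comm] at hfin₁ hfin₂ hcard
  obtain ⟨hexists_q, hsum_q⟩ := basis_sum_of_shiftStable hq hpq.symm hstabq hfin₁ hfin₂ hcard
  refine ⟨hexists_p, hexists_q, fun a b ha hb => ⟨hsum_p a ha, ?_⟩⟩
  linear_combination hsum_q b hb

theorem p_basis_q_basis_sum (p q : ℕ) (hp : 0 < p) (hq : 0 < q)
    (hpq : Nat.Coprime p q) (σ : Set ℤ) (hne : σ.Nonempty)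
    (hstabp : ∀ x ∈ σ, x + p ∈ σ) (hstabq : ∀ x ∈ σ, x + q ∈ σ)
    (hfin₁ : (σ \ Gam p q).Finite) (hfin₂ : (Gam p q \ σ).Finite)
    (hcard : (σ \ Gam p q).ncard = (Gam p q \ σ).ncard) :
    (∀ i : ℕ, i < p → ∃ m : ℤ, IsLeast {x : ℤ | x ∈ σ ∧ x % (p : ℤ) = (i : ℤ)} m) ∧
    (∀ j : ℕ, j < q → ∃ m : ℤ, IsLeast {x : ℤ | x ∈ σ ∧ x % (q : ℤ) = (j : ℤ)} m) ∧
    ∀ a b : ℕ → ℤ,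
      (∀ i : ℕ, i < p → IsLeast {x : ℤ | x ∈ σ ∧ x % (p : ℤ) = (i : ℤ)} (a i)) →
      (∀ j : ℕ, j < q → IsLeast {x : ℤ | x ∈ σ ∧ x % (q : ℤ) = (j : ℤ)} (b j)) →
      2 * ∑ i ∈ Finset.range p, a i = (p : ℤ) * (q : ℤ) * ((p : ℤ) - 1) ∧
      2 * ∑ j ∈ Finset.range q, b j = (p : ℤ) * (q : ℤ) * ((q : ℤ) - 1) :=
  p_basis_q_basis_sum_general p q hp hq hpq σ hstabp hstabq hfin₁ hfin₂ hcard
end
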